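/- Let $q : [0,T] \to \mathbb{R}^2$ be differentiable with $|\dot{q}_t| \leq M$ for all $t$, let $\alpha : \mathbb{R}^2 \to \mathbb{R}$ be $K$-Lipschitz satisfying $0 < \alpha_0 \leq \alpha \leq \|\alpha\|_\infty$, let $f : \mathbb{R}^2 \to \mathbb{R}$ be bounded by $\|f\|_\infty$ and $K_f$-Lipschitz, set $\beta_t = \int_0^t \alpha(q_s)\,ds$, and let $\mu > 0$. Then $\Big|\int_0^t \cos\big(\tfrac{\beta_s}{\mu}\big)\,f(q_s)\,ds\Big| \leq \Big(\pi \frac{\|f\|_\infty K + \|\alpha\|_\infty K_f}{\alpha_0^3}\,M\,\|\alpha\|_\infty\, t + \frac{2\pi \|f\|_\infty}{\alpha_0}\Big)\mu$ for all $t \in [0,T]$. -/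

import Mathlib

open Real MeasureTheory Set Function
open scoped NNReal

/-!
Substituting `u = β s` turns the integral into `∫₀^{β t} cos (u / μ) G u du` with amplitude
`G = (f ∘ q / α ∘ q) ∘ β⁻¹`. Since `β' = α ∘ q ≥ α₀`, the inverse clock `β⁻¹` is
`α₀⁻¹`-Lipschitz, so `G` is bounded by `H = ‖f‖∞ / α₀` and `L`-Lipschitz with
`L = (‖f‖∞ K + ‖α‖∞ K_f) M / α₀³`. Translating by half a period `π μ` flips the sign of the
cosine, so twice the integral is the integral of `cos (u / μ) (G u - G (u - π μ))`, of size at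
most `L π μ β_t`, plus two boundary pieces of size at most `H π μ`; finally `β_t ≤ ‖α‖∞ t`.
-/

theorem Function.Antiperiodic.abs_integral_mul_le {φ G : ℝ → ℝ} {c H : ℝ} {L : ℝ≥0}
    (hφ : Antiperiodic φ c) (hφc : Continuous φ) (hφ1 : ∀ x, |φ x| ≤ 1)
    (hG : LipschitzWith L G) (hGH : ∀ x, |G x| ≤ H) (a b : ℝ) :
    |∫ x in a..b, φ x * G x| ≤ |c| * (2 * H + L * |b - a|) / 2 := by
  set h : ℝ → ℝ := fun x => φ x * G x
  set k : ℝ → ℝ := fun x => φ x * G (x - c)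
  have hh : Continuous h := hφc.mul hG.continuous
  have hk : Continuous k := hφc.mul (hG.continuous.comp (continuous_sub_right c))
  have hkH (a' : ℝ) : |∫ x in a'..a' + c, k x| ≤ H * |c| := by
    simpa using intervalIntegral.norm_integral_le_of_norm_le_const (f := k) (a := a') (b := a' + c)
      fun x _ => by
        simpa [k, abs_mul] using mul_le_mul (hφ1 x) (hGH (x - c)) (abs_nonneg _) zero_le_one
  have hhk : |∫ x in a..b, (h x - k x)| ≤ L * |c| * |b - a| := by
    refine intervalIntegral.norm_integral_le_of_norm_le_const (f := fun x => h x - k x)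
      fun x _ => ?_
    have := hG.dist_le_mul x (x - c)
    rw [Real.dist_eq, Real.dist_eq, sub_sub_cancel] at this
    simpa [h, k, ← mul_sub, abs_mul] using mul_le_mul (hφ1 x) this (abs_nonneg _) zero_le_one
  have hshift : ∫ x in a..b, h x = -∫ x in a + c..b + c, k x := by
    rw [← intervalIntegral.integral_comp_add_right k c, ← intervalIntegral.integral_neg]
    simp [h, k, hφ _]
  have hsplit : 2 * ∫ x in a..b, h x
      = (∫ x in a..b, (h x - k x)) + ((∫ x in a..a + c, k x) - ∫ x in b..b + c, k x) := by
    rw [intervalIntegral.integral_sub (hh.intervalIntegrable _ _) (hk.intervalIntegrable _ _),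
      ← intervalIntegral.integral_interval_sub_interval_comm (hk.intervalIntegrable _ _)
      (hk.intervalIntegrable _ _) (hk.intervalIntegrable _ _)]
    linarith
  have := abs_add_three (∫ x in a..b, (h x - k x)) (∫ x in a..a + c, k x)
    (-∫ x in b..b + c, k x)
  rw [abs_neg, ← sub_eq_add_neg, add_sub_assoc, ← hsplit, abs_mul, abs_two] at this
  nlinarith [hkH a, hkH b]

theorem abs_integral_cos_div_mul_le {G : ℝ → ℝ} {μ a b H : ℝ} {L : ℝ≥0} (hμ : 0 < μ)
    (hG : LipschitzOnWith L G (uIcc a b)) (hGH : ∀ x ∈ uIcc a b, |G x| ≤ H) :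
    |∫ u in a..b, cos (u / μ) * G u| ≤ π * μ * (2 * H + L * |b - a|) / 2 := by
  set p : ℝ → ℝ := fun u => projIcc (min a b) (max a b) min_le_max u
  have hp (u : ℝ) : p u ∈ uIcc a b := Subtype.prop _
  have hcos : Antiperiodic (fun u => cos (u / μ)) (π * μ) := fun u => by
    simp [add_div, hμ.ne', cos_add_pi]
  have hext : ∫ u in a..b, cos (u / μ) * G u = ∫ u in a..b, cos (u / μ) * G (p u) :=
    intervalIntegral.integral_congr fun u hu => by simp [p, projIcc_of_mem _ hu]
  have hpL : LipschitzWith 1 p :=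
    mul_one (1 : ℝ≥0) ▸ (LipschitzWith.subtype_val _).comp (LipschitzWith.projIcc min_le_max)
  have hGp : LipschitzWith L (G ∘ p) := by
    simpa [lipschitzOnWith_univ] using hG.comp hpL.lipschitzOnWith (mapsTo_univ_iff.2 hp)
  have := hcos.abs_integral_mul_le (by fun_prop) (fun u => abs_cos_le_one _) hGp
    (fun u => hGH _ (hp u)) a b
  rwa [hext, ← abs_of_pos (mul_pos pi_pos hμ)]

theorem lipschitzOnWith_invFunOn {X Y : Type*} [PseudoMetricSpace X] [Nonempty X]
    [PseudoMetricSpace Y] {f : X → Y} {s : Set X} {m : ℝ≥0} (hm : 0 < m)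
    (hf : ∀ x ∈ s, ∀ y ∈ s, m * dist x y ≤ dist (f x) (f y)) :
    LipschitzOnWith m⁻¹ (invFunOn f s) (f '' s) := by
  refine LipschitzOnWith.of_dist_le_mul ?_
  rintro _ ⟨x, hx, rfl⟩ _ ⟨y, hy, rfl⟩
  have := hf _ (invFunOn_mem (f := f) ⟨x, hx, rfl⟩) _ (invFunOn_mem (f := f) ⟨y, hy, rfl⟩)
  rw [invFunOn_eq (f := f) ⟨x, hx, rfl⟩, invFunOn_eq (f := f) ⟨y, hy, rfl⟩] at this
  rwa [NNReal.coe_inv, inv_mul_eq_div, le_div_iff₀' (by exact_mod_cast hm)]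

theorem mul_dist_le_dist_of_le_deriv {β ρ : ℝ → ℝ} {a b m : ℝ}
    (hβc : ContinuousOn β (Icc a b)) (hβ : ∀ x ∈ Ioo a b, HasDerivAt β (ρ x) x)
    (hρm : ∀ x ∈ Ioo a b, m ≤ ρ x) (hm : 0 ≤ m) :
    ∀ x ∈ Icc a b, ∀ y ∈ Icc a b, m * dist x y ≤ dist (β x) (β y) := by
  intro x hx y hy
  wlog hxy : x ≤ y generalizing x y
  · rw [dist_comm, dist_comm (β x)]
    exact this y hy x hx (le_of_not_ge hxy)
  have hD : DifferentiableOn ℝ β (interior (Icc a b)) := by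
    rw [interior_Icc]
    exact fun x hx => (hβ x hx).differentiableAt.differentiableWithinAt
  have hmono := (convex_Icc a b).mul_sub_le_image_sub_of_le_deriv hβc hD
    (fun x hx => by rw [interior_Icc] at hx; rw [(hβ x hx).deriv]; exact hρm x hx) x hx y hy hxy
  rw [Real.dist_eq, Real.dist_eq, abs_sub_comm, abs_of_nonneg (sub_nonneg.2 hxy), abs_sub_comm,
    abs_of_nonneg ((mul_nonneg hm (sub_nonneg.2 hxy)).trans hmono)]
  exact hmono

theorem abs_integral_cos_comp_mul_le {β ρ g : ℝ → ℝ} {a b μ H : ℝ} {m L : ℝ≥0}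
    (hab : a ≤ b) (hμ : 0 < μ) (hm : 0 < m)
    (hβc : ContinuousOn β (Icc a b)) (hβ : ∀ x ∈ Ioo a b, HasDerivAt β (ρ x) x)
    (hρc : ContinuousOn ρ (Icc a b)) (hρm : ∀ x ∈ Ioo a b, m ≤ ρ x)
    (hg : LipschitzOnWith L g (Icc a b)) (hgH : ∀ x ∈ Icc a b, |g x| ≤ H) :
    |∫ s in a..b, cos (β s / μ) * (g s * ρ s)| ≤ π * μ * (2 * H + L / m * |β b - β a|) / 2 := by
  have hI : uIcc a b = Icc a b := uIcc_of_le hab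
  have hanti := mul_dist_le_dist_of_le_deriv hβc hβ hρm m.2
  have hinj : InjOn β (Icc a b) := fun x hx y hy hxy => by
    have := hanti x hx y hy
    rw [hxy, dist_self] at this
    exact dist_le_zero.1 (by nlinarith [dist_nonneg (x := x) (y := y), NNReal.coe_pos.2 hm])
  have hmaps : MapsTo (invFunOn β (Icc a b)) (β '' Icc a b) (Icc a b) :=
    fun _ ⟨x, hx, hu⟩ => invFunOn_mem ⟨x, hx, hu⟩
  set G := g ∘ invFunOn β (Icc a b)
  have hGL : LipschitzOnWith (L * m⁻¹) G (β '' Icc a b) :=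
    hg.comp (lipschitzOnWith_invFunOn hm hanti) hmaps
  have hsub : ∫ s in a..b, cos (β s / μ) * (g s * ρ s) = ∫ u in β a..β b, cos (u / μ) * G u := by
    rw [← intervalIntegral.integral_comp_mul_deriv'' (g := fun u => cos (u / μ) * G u) (hI ▸ hβc)
      (fun x hx => (hβ x (by simpa [hab] using hx)).hasDerivWithinAt) (hI ▸ hρc)
      ((by fun_prop : Continuous fun u => cos (u / μ)).continuousOn.mul (hI ▸ hGL.continuousOn))]
    refine intervalIntegral.integral_congr fun s hs => ?_
    simp [G, hinj.leftInvOn_invFunOn (hI ▸ hs), mul_assoc]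
  have hsurj : uIcc (β a) (β b) ⊆ β '' Icc a b := hI ▸ intermediate_value_uIcc (hI ▸ hβc)
  rw [hsub]
  simpa [div_eq_mul_inv] using abs_integral_cos_div_mul_le hμ (hGL.mono hsurj)
    (fun u hu => hgH _ (hmaps (hsurj hu)))

theorem hasDerivAt_integral_of_continuousOn {ρ : ℝ → ℝ} {a b x : ℝ}
    (hρ : ContinuousOn ρ (Icc a b)) (hx : x ∈ Ioo a b) :
    HasDerivAt (fun t => ∫ s in a..t, ρ s) (ρ x) x :=
  intervalIntegral.integral_hasDerivAt_right
    ((hρ.mono (uIcc_subset_Icc (left_mem_Icc.2 (hx.1.trans hx.2).le)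
      (Ioo_subset_Icc_self hx))).intervalIntegrable)
    ((hρ.mono Ioo_subset_Icc_self).stronglyMeasurableAtFilter isOpen_Ioo x hx)
    (hρ.continuousAt (Icc_mem_nhds hx.1 hx.2))

theorem abs_integral_cos_primitive_mul_le {ρ h : ℝ → ℝ} {a b μ A H : ℝ} {m L : ℝ≥0}
    (hab : a ≤ b) (hμ : 0 < μ) (hm : 0 < m) (hρ : ContinuousOn ρ (Icc a b))
    (hρm : ∀ s ∈ Icc a b, m ≤ ρ s) (hρA : ∀ s ∈ Icc a b, ρ s ≤ A)
    (hg : LipschitzOnWith L (fun s => h s / ρ s) (Icc a b))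
    (hgH : ∀ s ∈ Icc a b, |h s / ρ s| ≤ H) :
    |∫ s in a..b, cos ((∫ r in a..s, ρ r) / μ) * h s|
      ≤ π * μ * (2 * H + L / m * A * (b - a)) / 2 := by
  have hI : uIcc a b = Icc a b := uIcc_of_le hab
  have hρ0 (s : ℝ) (hs : s ∈ Icc a b) : ρ s ≠ 0 := ((NNReal.coe_pos.2 hm).trans_le (hρm s hs)).ne'
  have hh : ∫ s in a..b, cos ((∫ r in a..s, ρ r) / μ) * h s
      = ∫ s in a..b, cos ((∫ r in a..s, ρ r) / μ) * (h s / ρ s * ρ s) :=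
    intervalIntegral.integral_congr fun s hs => by rw [div_mul_cancel₀ _ (hρ0 s (hI ▸ hs))]
  rw [hh]
  have hβc : ContinuousOn (fun s => ∫ r in a..s, ρ r) (Icc a b) :=
    hI ▸ intervalIntegral.continuousOn_primitive_interval (hI ▸ hρ.integrableOn_Icc)
  have hβb : |(∫ r in a..b, ρ r) - ∫ r in a..a, ρ r| ≤ A * (b - a) := by
    rw [intervalIntegral.integral_same, sub_zero, ← abs_of_nonneg (sub_nonneg.2 hab)]
    refine intervalIntegral.norm_integral_le_of_norm_le_const (f := ρ) fun s hs => ?_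
    have hs : s ∈ Icc a b := hI ▸ uIoc_subset_uIcc hs
    rw [Real.norm_eq_abs, abs_of_nonneg (m.2.trans (hρm s hs))]
    exact hρA s hs
  refine (abs_integral_cos_comp_mul_le hab hμ hm hβc
    (fun x hx => hasDerivAt_integral_of_continuousOn hρ hx) hρ
    (fun x hx => hρm x (Ioo_subset_Icc_self hx)) hg hgH).trans ?_
  rw [mul_assoc _ A]
  gcongr

theorem nonneg_of_abs_sub_le_mul_norm {E : Type*} [NormedAddCommGroup E] [Nontrivial E]
    {φ : E → ℝ} {K : ℝ} (h : ∀ x y, |φ x - φ y| ≤ K * ‖x - y‖) : 0 ≤ K := by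
  obtain ⟨x, hx⟩ := exists_ne (0 : E)
  have := (abs_nonneg _).trans (h x 0)
  rw [sub_zero] at this
  exact nonneg_of_mul_nonneg_left this (norm_pos_iff.2 hx)

theorem LipschitzWith.div_of_bounds {X : Type*} [PseudoMetricSpace X] {f α : X → ℝ}
    {Kf K F A α₀ : ℝ≥0} (hf : LipschitzWith Kf f) (hα : LipschitzWith K α)
    (hfF : ∀ x, |f x| ≤ F) (hα₀ : 0 < α₀) (hlb : ∀ x, α₀ ≤ α x) (hub : ∀ x, α x ≤ A) :
    LipschitzWith ((F * K + A * Kf) / α₀ ^ 2) (fun x => f x / α x) := by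
  refine LipschitzWith.of_dist_le_mul fun x y => ?_
  have hα₀' : (0 : ℝ) < α₀ := hα₀
  have hx := hα₀'.trans_le (hlb x)
  have hy := hα₀'.trans_le (hlb y)
  have hfxy := hf.dist_le_mul x y
  have hαxy := hα.dist_le_mul y x
  rw [Real.dist_eq] at hfxy hαxy ⊢
  rw [dist_comm] at hαxy
  have hnum : |(f x - f y) * α y + f y * (α y - α x)| ≤ (F * K + A * Kf) * dist x y := by
    calc |(f x - f y) * α y + f y * (α y - α x)|
        ≤ |(f x - f y) * α y| + |f y * (α y - α x)| := abs_add_le _ _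
      _ = |f x - f y| * α y + |f y| * |α y - α x| := by rw [abs_mul, abs_mul, abs_of_pos hy]
      _ ≤ Kf * dist x y * A + F * (K * dist x y) := by
          gcongr
          exacts [hub y, hfF y]
      _ = (F * K + A * Kf) * dist x y := by ring
  calc |f x / α x - f y / α y|
      = |(f x - f y) * α y + f y * (α y - α x)| / (α x * α y) := by
        rw [div_sub_div _ _ hx.ne' hy.ne', abs_div, abs_of_pos (mul_pos hx hy)]
        congr 2; ring
    _ ≤ (F * K + A * Kf) * dist x y / (α₀ * α₀) := by
        gcongr
        exacts [hlb x, hlb y]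
    _ = ((F * K + A * Kf) / α₀ ^ 2 : ℝ≥0) * dist x y := by
        push_cast; ring

theorem oscillatory_integral_bound_general
    (T M α₀ A K F Kf μ : ℝ) (hμ : 0 < μ) (hα₀ : 0 < α₀)
    (q q' : ℝ → EuclideanSpace ℝ (Fin 2))
    (hq : ∀ t ∈ Set.Icc (0:ℝ) T, HasDerivAt q (q' t) t)
    (hq' : ∀ t ∈ Set.Icc (0:ℝ) T, ‖q' t‖ ≤ M)
    (α f : EuclideanSpace ℝ (Fin 2) → ℝ)
    (hlb : ∀ x, α₀ ≤ α x) (hub : ∀ x, α x ≤ A)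
    (hαLip : ∀ x y, |α x - α y| ≤ K * ‖x - y‖)
    (hfB : ∀ x, |f x| ≤ F)
    (hfLip : ∀ x y, |f x - f y| ≤ Kf * ‖x - y‖)
    (β : ℝ → ℝ) (hβ : ∀ t, β t = ∫ s in (0:ℝ)..t, α (q s)) :
    ∀ t ∈ Set.Icc (0:ℝ) T,
      |∫ s in (0:ℝ)..t, Real.cos (β s / μ) * f (q s)| ≤
        (π * ((F * K + A * Kf) / α₀ ^ 3) * M * A * t + 2 * π * F / α₀) * μ := by
  intro t ht
  lift M to ℝ≥0 using (norm_nonneg _).trans (hq' t ht)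
  lift F to ℝ≥0 using (abs_nonneg _).trans (hfB 0)
  lift K to ℝ≥0 using nonneg_of_abs_sub_le_mul_norm hαLip
  lift Kf to ℝ≥0 using nonneg_of_abs_sub_le_mul_norm hfLip
  lift α₀ to ℝ≥0 using hα₀.le
  lift A to ℝ≥0 using hα₀.le.trans ((hlb 0).trans (hub 0))
  obtain rfl : β = fun t => ∫ s in (0:ℝ)..t, α (q s) := funext hβ
  have hsub : Icc 0 t ⊆ Icc 0 T := Icc_subset_Icc_right ht.2
  have hqL : LipschitzOnWith M q (Icc 0 t) :=
    (convex_Icc 0 t).lipschitzOnWith_of_nnnorm_hasDerivWithin_le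
      (fun s hs => (hq s (hsub hs)).hasDerivWithinAt) fun s hs => hq' s (hsub hs)
  have hαL : LipschitzWith K α := .of_dist_le_mul fun x y => dist_eq_norm x y ▸ hαLip x y
  have hfL : LipschitzWith Kf f := .of_dist_le_mul fun x y => dist_eq_norm x y ▸ hfLip x y
  have hgH (s : ℝ) (_ : s ∈ Icc 0 t) : |f (q s) / α (q s)| ≤ F / α₀ := by
    rw [abs_div, abs_of_pos (hα₀.trans_le (hlb _))]
    exact div_le_div₀ F.coe_nonneg (hfB _) hα₀ (hlb _)
  refine (abs_integral_cos_primitive_mul_le ht.1 hμ hα₀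
    (hαL.continuous.comp_continuousOn hqL.continuousOn) (fun s _ => hlb (q s))
    (fun s _ => hub (q s)) ((hfL.div_of_bounds hαL hfB hα₀ hlb hub).comp_lipschitzOnWith hqL)
    hgH).trans ?_
  rw [← sub_nonneg]
  have ht0 := ht.1
  push_cast
  ring_nf
  positivity

/-- Riemann–Lebesgue type estimate for `∫_0^t cos(β_s/μ) f(q_s) ds`. -/
theorem oscillatory_integral_bound
    (T M α₀ A K F Kf μ : ℝ) (hT : 0 ≤ T) (hμ : 0 < μ) (hα₀ : 0 < α₀)
    (q q' : ℝ → EuclideanSpace ℝ (Fin 2))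
    (hq : ∀ t ∈ Set.Icc (0:ℝ) T, HasDerivAt q (q' t) t)
    (hq' : ∀ t ∈ Set.Icc (0:ℝ) T, ‖q' t‖ ≤ M)
    (α f : EuclideanSpace ℝ (Fin 2) → ℝ)
    (hlb : ∀ x, α₀ ≤ α x) (hub : ∀ x, α x ≤ A)
    (hαLip : ∀ x y, |α x - α y| ≤ K * ‖x - y‖)
    (hfB : ∀ x, |f x| ≤ F)
    (hfLip : ∀ x y, |f x - f y| ≤ Kf * ‖x - y‖)
    (β : ℝ → ℝ) (hβ : ∀ t, β t = ∫ s in (0:ℝ)..t, α (q s)) :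
    ∀ t ∈ Set.Icc (0:ℝ) T,
      |∫ s in (0:ℝ)..t, Real.cos (β s / μ) * f (q s)| ≤
        (π * ((F * K + A * Kf) / α₀ ^ 3) * M * A * t + 2 * π * F / α₀) * μ :=
  oscillatory_integral_bound_general T M α₀ A K F Kf μ hμ hα₀ q q' hq hq' α f hlb hub hαLip hfB
    hfLip β hβ
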